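/- arXiv:2510.24730 — 2 statements merged into one kernel-verified Lean document; each statement's English description precedes it below -/
import Mathlib

section
/- If f is L-smooth, satisfies the Polyak-Łojasiewicz inequality (1/2)‖∇f(x)‖² ≥ μ(f(x) - f*) with μ > 0, and gradient descent uses step size η = 1/L, then f(x_{k+1}) - f* ≤ (1 - μ/L)(f(x_k) - f*), giving geometric convergence f(x_k) - f* ≤ (1 - μ/L)^k (f(x_0) - f*). -/
/-!
The descent lemma for an `L`-Lipschitz gradient shows that a gradient step of length `1 / L`
decreases `f` by at least `‖∇f‖² / (2L)`, and the Polyak–Łojasiewicz inequality turns this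
decrease into at least `μ / L` times the current gap `f - f*`. Iterating the resulting one-step
contraction of the nonnegative gaps gives the geometric rate.
-/

open scoped RealInnerProductSpace

theorem le_geom_of_nonneg {u : ℕ → ℝ} {c : ℝ} (hu : ∀ k, 0 ≤ u k)
    (h : ∀ k, u (k + 1) ≤ c * u k) (k : ℕ) : u k ≤ c ^ k * u 0 := by
  rcases le_or_gt 0 c with hc | hc
  · exact le_geom hc k fun j _ ↦ h j
  -- A negative ratio forces every term to vanish.
  have hu0 : u 0 = 0 := le_antisymm (nonpos_of_mul_nonneg_right ((hu 1).trans (h 0)) hc) (hu 0)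
  have huk : u k = 0 := by
    cases k with
    | zero => exact hu0
    | succ j => exact le_antisymm ((h j).trans (mul_nonpos_of_nonpos_of_nonneg hc.le (hu j))) (hu _)
  simp [huk, hu0]

section LipschitzGradient

variable {E : Type*} [NormedAddCommGroup E] [InnerProductSpace ℝ E]
  {f : E → ℝ} {f' : E → E} {L : ℝ}

theorem inner_sub_gradient_le (hlip : ∀ x y, ‖f' x - f' y‖ ≤ L * ‖x - y‖)
    (x v : E) {t : ℝ} (ht : 0 ≤ t) : ⟪f' (x + t • v) - f' x, v⟫ ≤ L * t * ‖v‖ ^ 2 :=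
  calc ⟪f' (x + t • v) - f' x, v⟫ ≤ ‖f' (x + t • v) - f' x‖ * ‖v‖ := real_inner_le_norm _ _
    _ ≤ L * ‖t • v‖ * ‖v‖ := by
        gcongr
        simpa using hlip (x + t • v) x
    _ = L * t * ‖v‖ ^ 2 := by rw [norm_smul, Real.norm_of_nonneg ht]; ring

variable [CompleteSpace E]

theorem HasGradientAt.hasDerivAt_add_smul {g x v : E} {t : ℝ}
    (h : HasGradientAt f g (x + t • v)) :
    HasDerivAt (fun s : ℝ ↦ f (x + s • v)) ⟪g, v⟫ t := by
  have hline : HasDerivAt (fun s : ℝ ↦ x + s • v) v t := by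
    simpa using ((hasDerivAt_id t).smul_const v).const_add x
  have hcomp := h.hasFDerivAt.comp_hasDerivAt t hline
  simp only [InnerProductSpace.toDual_apply_apply] at hcomp
  exact hcomp

theorem le_add_inner_add_of_lipschitz_gradient (hdiff : ∀ x, HasGradientAt f (f' x) x)
    (hlip : ∀ x y, ‖f' x - f' y‖ ≤ L * ‖x - y‖) (x v : E) :
    f (x + v) ≤ f x + ⟪f' x, v⟫ + L / 2 * ‖v‖ ^ 2 := by
  -- `f` along the segment minus its quadratic model; Lipschitz continuity of `f'` makes it antitone.
  set g : ℝ → ℝ := fun t ↦ f (x + t • v) - t * ⟪f' x, v⟫ - L / 2 * t ^ 2 * ‖v‖ ^ 2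
  have hg : ∀ t, HasDerivAt g (⟪f' (x + t • v) - f' x, v⟫ - L * t * ‖v‖ ^ 2) t := by
    intro t
    have hquad := ((hasDerivAt_pow 2 t).const_mul (L / 2)).mul_const (‖v‖ ^ 2)
    refine ((((hdiff (x + t • v)).hasDerivAt_add_smul).sub
      ((hasDerivAt_id t).mul_const ⟪f' x, v⟫)).sub hquad).congr_deriv ?_
    simp only [inner_sub_left]
    ring
  have hanti : AntitoneOn g (Set.Ici 0) :=
    antitoneOn_of_hasDerivWithinAt_nonpos (convex_Ici 0)
      (fun t _ ↦ (hg t).continuousAt.continuousWithinAt) (fun t _ ↦ (hg t).hasDerivWithinAt)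
      fun t ht ↦ by
        rw [interior_Ici] at ht
        linarith [inner_sub_gradient_le hlip x v ht.le]
  have hg01 : g 1 ≤ g 0 := hanti Set.self_mem_Ici (Set.mem_Ici.2 zero_le_one) zero_le_one
  simp only [g, one_smul, zero_smul, add_zero] at hg01
  linarith

theorem gradient_step_le_sub_sq_norm (hL : 0 < L) (hdiff : ∀ x, HasGradientAt f (f' x) x)
    (hlip : ∀ x y, ‖f' x - f' y‖ ≤ L * ‖x - y‖) (x : E) :
    f (x - (1 / L) • f' x) ≤ f x - 1 / (2 * L) * ‖f' x‖ ^ 2 := by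
  have h := le_add_inner_add_of_lipschitz_gradient hdiff hlip x (-((1 / L) • f' x))
  rw [← sub_eq_add_neg, inner_neg_right, real_inner_smul_right, real_inner_self_eq_norm_sq,
    norm_neg, norm_smul, Real.norm_of_nonneg (by positivity)] at h
  convert h using 1
  field_simp
  ring

theorem gradient_step_sub_le_of_pl (hL : 0 < L) (hdiff : ∀ x, HasGradientAt f (f' x) x)
    (hlip : ∀ x y, ‖f' x - f' y‖ ≤ L * ‖x - y‖) {μ fstar : ℝ} (x : E)
    (hPL : μ * (f x - fstar) ≤ 1 / 2 * ‖f' x‖ ^ 2) :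
    f (x - (1 / L) • f' x) - fstar ≤ (1 - μ / L) * (f x - fstar) := by
  have hdecrease := gradient_step_le_sub_sq_norm hL hdiff hlip x
  have hPL' : μ / L * (f x - fstar) ≤ 1 / (2 * L) * ‖f' x‖ ^ 2 := by
    calc μ / L * (f x - fstar) = μ * (f x - fstar) / L := by ring
      _ ≤ 1 / 2 * ‖f' x‖ ^ 2 / L := by gcongr
      _ = 1 / (2 * L) * ‖f' x‖ ^ 2 := by ring
  linarith

end LipschitzGradient

theorem pl_geometric_convergence_general {n : ℕ}
    (f : EuclideanSpace ℝ (Fin n) → ℝ)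
    (f' : EuclideanSpace ℝ (Fin n) → EuclideanSpace ℝ (Fin n)) (L μ fstar : ℝ)
    (hL : 0 < L)
    (hdiff : ∀ x, HasGradientAt f (f' x) x)
    (hlip : ∀ x y, ‖f' x - f' y‖ ≤ L * ‖x - y‖)
    (hglb : IsGLB (Set.range f) fstar)
    (hPL : ∀ y, μ * (f y - fstar) ≤ 1 / 2 * ‖f' y‖ ^ 2)
    (x : ℕ → EuclideanSpace ℝ (Fin n))
    (hiter : ∀ k, x (k + 1) = x k - (1 / L) • f' (x k)) :
    (∀ k, f (x (k + 1)) - fstar ≤ (1 - μ / L) * (f (x k) - fstar)) ∧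
    (∀ k, f (x k) - fstar ≤ (1 - μ / L) ^ k * (f (x 0) - fstar)) := by
  have hstep : ∀ k, f (x (k + 1)) - fstar ≤ (1 - μ / L) * (f (x k) - fstar) := fun k ↦ by
    rw [hiter k]
    exact gradient_step_sub_le_of_pl hL hdiff hlip (x k) (hPL (x k))
  have hgap : ∀ k, 0 ≤ f (x k) - fstar := fun k ↦ sub_nonneg.2 (hglb.1 ⟨x k, rfl⟩)
  exact ⟨hstep, le_geom_of_nonneg (u := fun k ↦ f (x k) - fstar) hgap hstep⟩

theorem pl_geometric_convergence {n : ℕ}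
    (f : EuclideanSpace ℝ (Fin n) → ℝ)
    (f' : EuclideanSpace ℝ (Fin n) → EuclideanSpace ℝ (Fin n)) (L μ fstar : ℝ)
    (hL : 0 < L) (hμ : 0 < μ)
    (hdiff : ∀ x, HasGradientAt f (f' x) x)
    (hlip : ∀ x y, ‖f' x - f' y‖ ≤ L * ‖x - y‖)
    (hglb : IsGLB (Set.range f) fstar)
    (hPL : ∀ y, μ * (f y - fstar) ≤ 1 / 2 * ‖f' y‖ ^ 2)
    (x : ℕ → EuclideanSpace ℝ (Fin n))
    (hiter : ∀ k, x (k + 1) = x k - (1 / L) • f' (x k)) :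
    (∀ k, f (x (k + 1)) - fstar ≤ (1 - μ / L) * (f (x k) - fstar)) ∧
    (∀ k, f (x k) - fstar ≤ (1 - μ / L) ^ k * (f (x 0) - fstar)) :=
  pl_geometric_convergence_general f f' L μ fstar hL hdiff hlip hglb hPL x hiter
end

section
/- Weyl's eigenvalue perturbation bound: for symmetric matrices A, B ∈ ℝ^{n×n}, the i-th eigenvalues (sorted ascending) satisfy |λ_i(A) - λ_i(B)| ≤ ‖A - B‖₂ for each i. -/
/-!
Let `λ = λ_i(A)` and `λ' = λ_i(B)`. At least `n - i` eigenvectors of `A` have eigenvalue `≥ λ`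
and at least `i + 1` eigenvectors of `B` have eigenvalue `≤ λ'`, so their spans meet in some
`x ≠ 0`. Expanding the Rayleigh quotients in the two eigenbases gives
`λ ‖x‖² ≤ ⟪x, A x⟫` and `⟪x, B x⟫ ≤ λ' ‖x‖²`, hence
`(λ - λ') ‖x‖² ≤ ⟪x, (A - B) x⟫ ≤ ‖A - B‖ ‖x‖²`. Exchanging `A` and `B` bounds `λ' - λ`.
-/

/-- The eigenvalues of a Hermitian matrix sorted in ascending order. -/
noncomputable def sortedEig {n : ℕ} (A : Matrix (Fin n) (Fin n) ℝ)
    (hA : A.IsHermitian) (i : Fin n) : ℝ :=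
  ((Finset.univ.val.map hA.eigenvalues).sort (· ≤ ·)).get (Fin.cast (by simp) i)

open Finset Module Submodule RealInnerProductSpace

namespace List.Pairwise

variable {α : Type*} [Preorder α] [DecidableLE α] {l : List α}

theorem length_sub_le_countP_le (h : l.Pairwise (· ≤ ·)) {k : ℕ} (hk : k < l.length) :
    l.length - k ≤ l.countP (fun a => Decidable.decide (l[k] ≤ a)) := by
  have hdrop : ∀ a ∈ l.drop k, l[k] ≤ a := by
    rw [drop_eq_getElem_cons hk]
    rintro a (_ | ⟨_, ha⟩)
    · exact le_rfl
    · exact (pairwise_cons.1 ((drop_eq_getElem_cons hk) ▸ h.drop)).1 a ha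
  calc l.length - k = (l.drop k).length := length_drop.symm
    _ = (l.drop k).countP (fun a => Decidable.decide (l[k] ≤ a)) :=
      (countP_eq_length.2 (by simpa using hdrop)).symm
    _ ≤ l.countP (fun a => Decidable.decide (l[k] ≤ a)) := (drop_sublist k l).countP_le

theorem add_one_le_countP_le (h : l.Pairwise (· ≤ ·)) {k : ℕ} (hk : k < l.length) :
    k + 1 ≤ l.countP (fun a => Decidable.decide (a ≤ l[k])) := by
  have htake : ∀ a ∈ l.take (k + 1), a ≤ l[k] := by
    rw [take_succ_eq_append_getElem hk]
    intro a ha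
    rcases mem_append.1 ha with ha | ha
    · exact (pairwise_append.1 ((take_succ_eq_append_getElem hk) ▸ h.take)).2.2 a ha _
        (mem_singleton_self _)
    · exact (mem_singleton.1 ha).le
  calc k + 1 = (l.take (k + 1)).length := by simp [Nat.succ_le_of_lt hk]
    _ = (l.take (k + 1)).countP (fun a => Decidable.decide (a ≤ l[k])) :=
      (countP_eq_length.2 (by simpa using htake)).symm
    _ ≤ l.countP (fun a => Decidable.decide (a ≤ l[k])) := (take_sublist _ l).countP_le

end List.Pairwise

theorem card_filter_apply_eq_countP_sort {ι α : Type*} [Fintype ι] [LinearOrder α] (f : ι → α)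
    (p : α → Prop) [DecidablePred p] :
    #{j | p (f j)} = ((univ.val.map f).sort (· ≤ ·)).countP (fun a => decide (p a)) := by
  rw [← Multiset.coe_countP, Multiset.sort_eq, Multiset.countP_map]
  rfl

theorem Submodule.exists_ne_zero_mem_of_finrank_lt_add {K V : Type*} [DivisionRing K]
    [AddCommGroup V] [Module K V] [FiniteDimensional K V] {s t : Submodule K V}
    (h : finrank K V < finrank K s + finrank K t) : ∃ x ∈ s, x ∈ t ∧ x ≠ 0 := by
  by_contra! hst
  exact h.not_ge (finrank_add_finrank_le_of_disjoint (disjoint_def.2 hst))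

namespace OrthonormalBasis

variable {ι 𝕜 E : Type*} [Fintype ι] [RCLike 𝕜] [NormedAddCommGroup E] [InnerProductSpace 𝕜 E]

theorem inner_eq_zero_of_mem_span_image (b : OrthonormalBasis ι 𝕜 E) {s : Set ι} {x : E}
    (hx : x ∈ span 𝕜 (b '' s)) {j : ι} (hj : j ∉ s) : inner 𝕜 (b j) x = 0 := by
  rw [← b.coe_toBasis, Basis.mem_span_image] at hx
  rw [← b.repr_apply_apply, ← b.coe_toBasis_repr_apply]
  exact Finsupp.notMem_support_iff.1 fun h => hj (hx h)

theorem finrank_span_image (b : OrthonormalBasis ι 𝕜 E) (s : Finset ι) :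
    finrank 𝕜 (span 𝕜 (b '' s)) = #s := by
  have hb : LinearIndependent 𝕜 (fun j : (s : Set ι) => b j) :=
    b.orthonormal.linearIndependent.comp _ Subtype.val_injective
  rw [Set.image_eq_range, finrank_span_eq_card hb]
  simp only [SetLike.coe_sort_coe, Fintype.card_coe]

end OrthonormalBasis

section Rayleigh

variable {ι E : Type*} [Fintype ι] [NormedAddCommGroup E] [InnerProductSpace ℝ E]
  {T : E →ₗ[ℝ] E} {b : OrthonormalBasis ι ℝ E} {μ : ι → ℝ}

theorem inner_apply_self_eq_sum_of_apply_eq_smul (hT : ∀ j, T (b j) = μ j • b j) (x : E) :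
    ⟪x, T x⟫ = ∑ j, μ j * ⟪b j, x⟫ ^ 2 := by
  conv_lhs => arg 3; rw [← b.sum_repr' x]
  simp only [map_sum, map_smul, hT, inner_sum, inner_smul_right, real_inner_comm x]
  exact Finset.sum_congr rfl fun j _ => by ring

theorem mul_norm_sq_le_inner_apply_self_of_mem_span (hT : ∀ j, T (b j) = μ j • b j) {s : Set ι}
    {a : ℝ} (hs : ∀ j ∈ s, a ≤ μ j) {x : E} (hx : x ∈ span ℝ (b '' s)) :
    a * ‖x‖ ^ 2 ≤ ⟪x, T x⟫ := by
  simp only [inner_apply_self_eq_sum_of_apply_eq_smul hT, ← b.sum_sq_norm_inner_right x,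
    Real.norm_eq_abs, sq_abs, Finset.mul_sum]
  refine Finset.sum_le_sum fun j _ => ?_
  by_cases hj : j ∈ s
  · exact mul_le_mul_of_nonneg_right (hs j hj) (sq_nonneg _)
  · simp [b.inner_eq_zero_of_mem_span_image hx hj]

theorem inner_apply_self_le_mul_norm_sq_of_mem_span (hT : ∀ j, T (b j) = μ j • b j) {s : Set ι}
    {a : ℝ} (hs : ∀ j ∈ s, μ j ≤ a) {x : E} (hx : x ∈ span ℝ (b '' s)) :
    ⟪x, T x⟫ ≤ a * ‖x‖ ^ 2 := by
  have hnegT : ∀ j, (-T) (b j) = (-μ j) • b j := fun j => by simp [hT]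
  simpa using mul_norm_sq_le_inner_apply_self_of_mem_span hnegT (a := -a) (by simpa using hs) hx

end Rayleigh

theorem sub_le_opNorm_sub_of_finrank_lt {ι κ E : Type*} [Fintype ι] [Fintype κ]
    [NormedAddCommGroup E] [InnerProductSpace ℝ E] [FiniteDimensional ℝ E] {T U : E →L[ℝ] E}
    {b : OrthonormalBasis ι ℝ E} {c : OrthonormalBasis κ ℝ E} {μ : ι → ℝ} {ν : κ → ℝ}
    (hT : ∀ j, T (b j) = μ j • b j) (hU : ∀ k, U (c k) = ν k • c k) {s : Finset ι}
    {t : Finset κ} {a a' : ℝ} (hs : ∀ j ∈ s, a ≤ μ j) (ht : ∀ k ∈ t, ν k ≤ a')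
    (hcard : finrank ℝ E < #s + #t) : a - a' ≤ ‖T - U‖ := by
  obtain ⟨x, hxs, hxt, hx⟩ := exists_ne_zero_mem_of_finrank_lt_add (s := span ℝ (b '' s))
    (t := span ℝ (c '' t)) (by rwa [b.finrank_span_image, c.finrank_span_image])
  have key : (a - a') * ‖x‖ ^ 2 ≤ ‖T - U‖ * ‖x‖ ^ 2 := calc
    (a - a') * ‖x‖ ^ 2 = a * ‖x‖ ^ 2 - a' * ‖x‖ ^ 2 := by ring
    _ ≤ ⟪x, T x⟫ - ⟪x, U x⟫ :=
      sub_le_sub (mul_norm_sq_le_inner_apply_self_of_mem_span (T := T.toLinearMap) hT hs hxs)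
        (inner_apply_self_le_mul_norm_sq_of_mem_span (T := U.toLinearMap) hU ht hxt)
    _ = ⟪x, (T - U) x⟫ := by rw [sub_apply, inner_sub_right]
    _ ≤ ‖x‖ * ‖(T - U) x‖ := real_inner_le_norm _ _
    _ ≤ ‖x‖ * (‖T - U‖ * ‖x‖) := by gcongr; exact (T - U).le_opNorm x
    _ = ‖T - U‖ * ‖x‖ ^ 2 := by ring
  exact le_of_mul_le_mul_right key (by positivity)

theorem Matrix.IsHermitian.toEuclideanCLM_eigenvectorBasis {𝕜 n : Type*} [RCLike 𝕜] [Fintype n]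
    [DecidableEq n] {A : Matrix n n 𝕜} (hA : A.IsHermitian) (j : n) :
    Matrix.toEuclideanCLM (𝕜 := 𝕜) A (hA.eigenvectorBasis j) =
      hA.eigenvalues j • hA.eigenvectorBasis j := by
  apply WithLp.ofLp_injective
  simp [Matrix.ofLp_toEuclideanCLM, hA.mulVec_eigenvectorBasis]

section sortedEig

variable {n : ℕ} {A : Matrix (Fin n) (Fin n) ℝ} (hA : A.IsHermitian) (i : Fin n)

theorem sub_le_card_filter_sortedEig_le :
    n - i ≤ #{j | sortedEig A hA i ≤ hA.eigenvalues j} := by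
  rw [card_filter_apply_eq_countP_sort hA.eigenvalues (sortedEig A hA i ≤ ·)]
  calc n - i = ((univ.val.map hA.eigenvalues).sort (· ≤ ·)).length - i := by simp
    _ ≤ _ := (Multiset.pairwise_sort _ _).length_sub_le_countP_le (k := i) (by simp)

theorem add_one_le_card_filter_le_sortedEig :
    i + 1 ≤ #{j | hA.eigenvalues j ≤ sortedEig A hA i} := by
  rw [card_filter_apply_eq_countP_sort hA.eigenvalues (· ≤ sortedEig A hA i)]
  exact (Multiset.pairwise_sort _ _).add_one_le_countP_le (k := i) (by simp)

end sortedEig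

theorem sortedEig_sub_sortedEig_le {n : ℕ} {A B : Matrix (Fin n) (Fin n) ℝ} (hA : A.IsHermitian)
    (hB : B.IsHermitian) (i : Fin n) :
    sortedEig A hA i - sortedEig B hB i ≤
      ‖Matrix.toEuclideanCLM (𝕜 := ℝ) A - Matrix.toEuclideanCLM (𝕜 := ℝ) B‖ := by
  refine sub_le_opNorm_sub_of_finrank_lt hA.toEuclideanCLM_eigenvectorBasis
    hB.toEuclideanCLM_eigenvectorBasis (s := {j | sortedEig A hA i ≤ hA.eigenvalues j})
    (t := {k | hB.eigenvalues k ≤ sortedEig B hB i}) (fun j hj => (mem_filter.1 hj).2)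
    (fun k hk => (mem_filter.1 hk).2) ?_
  have hs := sub_le_card_filter_sortedEig_le hA i
  have ht := add_one_le_card_filter_le_sortedEig hB i
  rw [finrank_euclideanSpace_fin]
  omega

theorem weyl_eigenvalue_perturbation {n : ℕ} (A B : Matrix (Fin n) (Fin n) ℝ)
    (hA : A.IsHermitian) (hB : B.IsHermitian) :
    ∀ i : Fin n, |sortedEig A hA i - sortedEig B hB i| ≤
      ‖Matrix.toEuclideanCLM (𝕜 := ℝ) (A - B)‖ := by
  intro i
  rw [map_sub, abs_sub_le_iff]
  refine ⟨sortedEig_sub_sortedEig_le hA hB i, ?_⟩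
  rw [norm_sub_rev]
  exact sortedEig_sub_sortedEig_le hB hA i
end
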